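/- Define E_{2n+1,q} := 1 + [2n+1]_q! \sum_{a=1}^{n} (-1)^a \Delta_{a,q} / [2n-2a+1]_q!. Then \sum_{n\ge0} E_{2n+1,q} t^{2n+1}/(q;q)_{2n+1} = tanh_q(t), i.e., it equals sinh_q(t)/cosh_q(t) as formal power series over Q(q). -/

import Mathlib

/-- The `q`-integer `[m]_q = 1 + q + ⋯ + q^{m-1}`. -/
noncomputable def qInt {K : Type*} [Field K] (q : K) (m : ℕ) : K :=
  ∑ i ∈ Finset.range m, q ^ i

/-- The `q`-factorial `[m]_q! = [1]_q [2]_q ⋯ [m]_q`. -/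
noncomputable def qFact {K : Type*} [Field K] (q : K) : ℕ → K
  | 0 => 1
  | m + 1 => qFact q m * qInt q (m + 1)

/-- The `q`-Pochhammer symbol `(q;q)_m = (1-q)(1-q²)⋯(1-q^m)`. -/
noncomputable def qPoch {K : Type*} [Field K] (q : K) (m : ℕ) : K :=
  ∏ i ∈ Finset.range m, (1 - q ^ (i + 1))

/-- Determinant of the `n × n` lower Hessenberg matrix with `(i,j)` entry `1` if `j = i+1`,
`0` if `j > i+1`, and `f (i-j)` if `j ≤ i`. -/
noncomputable def hessDet {K : Type*} [Field K] (f : ℕ → K) (n : ℕ) : K :=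
  Matrix.det (Matrix.of fun i j : Fin n =>
    if (j : ℕ) = (i : ℕ) + 1 then 1
    else if (i : ℕ) + 1 < (j : ℕ) then 0
    else f ((i : ℕ) - (j : ℕ)))

/-- `Δ_{n,q}` in `ℚ(q)` with `q = X`. -/
noncomputable def DeltaQ (n : ℕ) : RatFunc ℚ :=
  hessDet (fun k => (qFact (RatFunc.X : RatFunc ℚ) (2 * k + 2))⁻¹) n

/-- `E_{2n+1,q} := 1 + [2n+1]_q! ∑_{a=1}^{n} (-1)^a Δ_{a,q} / [2n-2a+1]_q!`. -/
noncomputable def Etan (n : ℕ) : RatFunc ℚ :=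
  1 + qFact (RatFunc.X : RatFunc ℚ) (2 * n + 1) *
    ∑ a ∈ Finset.Icc 1 n,
      (-1 : RatFunc ℚ) ^ a * DeltaQ a / qFact (RatFunc.X : RatFunc ℚ) (2 * n - 2 * a + 1)

/-- `cosh_q(t) = ∑ t^{2n}/(q;q)_{2n}` in `ℚ(q)[[t]]`. -/
noncomputable def coshQ : PowerSeries (RatFunc ℚ) :=
  PowerSeries.mk fun m => if m % 2 = 0 then (qPoch (RatFunc.X : RatFunc ℚ) m)⁻¹ else 0

/-- `sinh_q(t) = ∑ t^{2n+1}/(q;q)_{2n+1}` in `ℚ(q)[[t]]`. -/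
noncomputable def sinhQ : PowerSeries (RatFunc ℚ) :=
  PowerSeries.mk fun m => if m % 2 = 1 then (qPoch (RatFunc.X : RatFunc ℚ) m)⁻¹ else 0

/-!
Expanding `Δ_{a,q}` along its last row gives `∑_{j ≤ a} (-1)^j Δ_{j,q} / [2(a-j)]_q! = 0` for
`a ≥ 1`, i.e. `∑ (-1)^a Δ_{a,q} x^a` is the reciprocal of `∑ x^k / [2k]_q!`. Since
`(q;q)_m = (1-q)^m [m]_q!`, substituting `x = t²` and rescaling `t ↦ t / (1-q)` turns that series
into `cosh_q(t)`. The definition of `E_{2n+1,q}` says exactly that `∑ E_{2n+1,q} t^{2n+1}/[2n+1]_q!`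
is the product of `∑ t^{2n+1}/[2n+1]_q!` (which becomes `sinh_q(t)`) with this reciprocal.
-/

open PowerSeries Finset

section Hessenberg

variable {K : Type*} [Field K]

def hessEntry (f : ℕ → K) (i j : ℕ) : K :=
  if j = i + 1 then 1 else if i + 1 < j then 0 else f (i - j)

lemma hessDet_eq_det_hessEntry (f : ℕ → K) (n : ℕ) :
    hessDet f n = (Matrix.of fun i j : Fin n => hessEntry f i j).det := rfl

lemma Fin.val_succAbove {n : ℕ} (j : Fin (n + 1)) (c : Fin n) :
    (j.succAbove c : ℕ) = if (c : ℕ) < j then (c : ℕ) else (c : ℕ) + 1 := by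
  rcases lt_or_ge c.castSucc j with h | h
  · rw [Fin.succAbove_of_castSucc_lt _ _ h, Fin.val_castSucc, if_pos (show (c : ℕ) < j from h)]
  · rw [Fin.succAbove_of_le_castSucc _ _ h, Fin.val_succ,
      if_neg (not_lt.mpr (show (j : ℕ) ≤ c from h))]

/-- Deleting the last row and the `j`-th column leaves a block lower triangular matrix whose
blocks are the `j × j` Hessenberg matrix and a unit lower triangular matrix. -/
lemma det_hessEntry_submatrix_last (f : ℕ → K) (n : ℕ) (j : Fin (n + 1)) :
    ((Matrix.of fun i c : Fin (n + 1) => hessEntry f i c).submatrix Fin.castSucc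
      j.succAbove).det = hessDet f j := by
  have hj : (j : ℕ) ≤ n := Nat.lt_succ_iff.mp j.isLt
  let e : Fin j ⊕ Fin (n - j) ≃ Fin n := finSumFinEquiv.trans (finCongr (by omega))
  have he_inl (r : Fin j) : (e (.inl r) : ℕ) = r := by simp [e]
  have he_inr (s : Fin (n - j)) : (e (.inr s) : ℕ) = j + s := by simp [e]
  have hblocks : ((Matrix.of fun i c : Fin (n + 1) => hessEntry f i c).submatrix Fin.castSucc
      j.succAbove).submatrix e e =
      Matrix.fromBlocks (Matrix.of fun i c : Fin j => hessEntry f i c) 0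
        (Matrix.of fun (s : Fin (n - j)) (c : Fin j) => hessEntry f (j + s) c)
        (Matrix.of fun s t : Fin (n - j) => hessEntry f (j + s) (j + t + 1)) := by
    ext (r | s) (c | t) <;>
      simp only [Matrix.submatrix_apply, Matrix.of_apply, Matrix.fromBlocks_apply₁₁,
        Matrix.fromBlocks_apply₁₂, Matrix.fromBlocks_apply₂₁, Matrix.fromBlocks_apply₂₂,
        Fin.val_castSucc, Fin.val_succAbove, he_inl, he_inr, Matrix.zero_apply]
    · rw [if_pos (by omega)]
    · have := r.isLt
      rw [if_neg (by omega), hessEntry, if_neg (by omega), if_pos (by omega)]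
    · rw [if_pos (by omega)]
    · rw [if_neg (by omega)]
  have hunit : (Matrix.of fun s t : Fin (n - j) => hessEntry f (j + s) (j + t + 1)).det = 1 := by
    rw [Matrix.det_of_isLowerTriangular]
    · exact Finset.prod_eq_one fun s _ => by simp [hessEntry]
    · intro s t hst
      have := OrderDual.toDual_lt_toDual.mp hst
      simp only [Matrix.of_apply, hessEntry]
      rw [if_neg (by omega), if_pos (by omega)]
  rw [← Matrix.det_submatrix_equiv_self e, hblocks, Matrix.det_fromBlocks_zero₁₂, hunit, mul_one,
    hessDet_eq_det_hessEntry]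

lemma hessDet_succ (f : ℕ → K) (n : ℕ) :
    hessDet f (n + 1) = ∑ j ∈ range (n + 1), (-1) ^ (n + j) * f (n - j) * hessDet f j := by
  rw [hessDet_eq_det_hessEntry, Matrix.det_succ_row _ (Fin.last n), ← Fin.sum_univ_eq_sum_range]
  refine Finset.sum_congr rfl fun j _ => ?_
  have := j.isLt
  rw [Fin.succAbove_last, det_hessEntry_submatrix_last, Matrix.of_apply, hessEntry, Fin.val_last,
    if_neg (by omega), if_neg (by omega)]

lemma mk_neg_one_pow_mul_hessDet_mul {g : ℕ → K} (hg : g 0 = 1) :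
    mk (fun n => (-1) ^ n * hessDet (fun k => g (k + 1)) n) * mk g = 1 := by
  ext (_ | n)
  · simp [hg, hessDet_eq_det_hessEntry]
  rw [coeff_mul, Nat.sum_antidiagonal_eq_sum_range_succ (fun i j => coeff i _ * coeff j _),
    Finset.sum_range_succ, coeff_one, if_neg n.succ_ne_zero]
  simp only [coeff_mk, Nat.sub_self, hg, mul_one, hessDet_succ, Finset.mul_sum,
    ← Finset.sum_add_distrib]
  refine Finset.sum_eq_zero fun j hj => ?_
  have hsign : (-1 : K) ^ (n + 1) * (-1) ^ (n + j) = -(-1) ^ j := by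
    rw [← pow_add, show n + 1 + (n + j) = 2 * n + j + 1 by ring, pow_succ, pow_add, pow_mul]
    simp
  rw [show n + 1 - j = n - j + 1 by have := Finset.mem_range.mp hj; omega]
  linear_combination (g (n - j + 1) * hessDet (fun k => g (k + 1)) j) * hsign

end Hessenberg

section qAnalogue

variable {K : Type*} [Field K]

lemma qPoch_eq_pow_mul_qFact (q : K) (m : ℕ) : qPoch q m = (1 - q) ^ m * qFact q m := by
  induction m with
  | zero => simp [qPoch, qFact]
  | succ m ih =>
    rw [qPoch, Finset.prod_range_succ, ← qPoch, ih, qFact, qInt, ← mul_neg_geom_sum]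
    ring

lemma inv_qPoch (q : K) (m : ℕ) : (qPoch q m)⁻¹ = (1 - q)⁻¹ ^ m * (qFact q m)⁻¹ := by
  rw [qPoch_eq_pow_mul_qFact, mul_inv, inv_pow]

lemma qFact_ne_zero {q : K} (hq : ∀ m, q ^ (m + 1) ≠ 1) (m : ℕ) : qFact q m ≠ 0 := by
  have hpoch : qPoch q m ≠ 0 :=
    Finset.prod_ne_zero_iff.mpr fun i _ => sub_ne_zero.mpr (hq i).symm
  rw [qPoch_eq_pow_mul_qFact] at hpoch
  exact right_ne_zero_of_mul hpoch

end qAnalogue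

lemma RatFunc.X_pow_succ_ne_one (m : ℕ) : (RatFunc.X : RatFunc ℚ) ^ (m + 1) ≠ 1 := by
  rw [← RatFunc.algebraMap_X, ← map_pow, ← map_one (algebraMap (Polynomial ℚ) (RatFunc ℚ)),
    (RatFunc.algebraMap_injective ℚ).ne_iff]
  intro h
  simpa using congrArg Polynomial.natDegree h

section EvenOdd

variable {R : Type*} [CommRing R]

lemma mk_even_eq_rescale_expand (c : R) (g : ℕ → R) :
    mk (fun m => if m % 2 = 0 then c ^ m * g m else 0) =
      rescale c (expand 2 two_ne_zero (mk fun k => g (2 * k))) := by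
  ext m
  rw [coeff_mk, coeff_rescale, coeff_expand, coeff_mk]
  split_ifs with h h' h' <;> grind

lemma mk_odd_eq_rescale_X_mul_expand (c : R) (g : ℕ → R) :
    mk (fun m => if m % 2 = 1 then c ^ m * g m else 0) =
      rescale c (X * expand 2 two_ne_zero (mk fun k => g (2 * k + 1))) := by
  ext (_ | m)
  · simp
  rw [coeff_mk, coeff_rescale, coeff_succ_X_mul, coeff_expand, coeff_mk]
  split_ifs with h h' h' <;> grind

end EvenOdd

lemma Etan_div_qFact (n : ℕ) :
    Etan n / qFact RatFunc.X (2 * n + 1) =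
      ∑ a ∈ range (n + 1), (-1) ^ a * DeltaQ a / qFact RatFunc.X (2 * (n - a) + 1) := by
  rw [Etan, add_div, mul_div_cancel_left₀ _ (qFact_ne_zero RatFunc.X_pow_succ_ne_one _),
    Finset.sum_range_succ', ← Finset.Ico_add_one_right_eq_Icc, Finset.sum_Ico_eq_sum_range,
    Nat.add_sub_cancel, add_comm]
  congr 1
  · refine Finset.sum_congr rfl fun a ha => ?_
    have := Finset.mem_range.mp ha
    rw [add_comm 1 a, show 2 * n - 2 * (a + 1) + 1 = 2 * (n - (a + 1)) + 1 by omega]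
  · simp [DeltaQ, hessDet]

lemma mk_DeltaQ_mul_mk_inv_qFact_even :
    mk (fun n => (-1) ^ n * DeltaQ n) * mk (fun k => (qFact (RatFunc.X : RatFunc ℚ) (2 * k))⁻¹)
      = 1 := by
  have hDelta (n : ℕ) :
      DeltaQ n = hessDet (fun k => (qFact (RatFunc.X : RatFunc ℚ) (2 * (k + 1)))⁻¹) n := by
    simp only [DeltaQ, mul_add, mul_one]
  simp only [hDelta]
  exact mk_neg_one_pow_mul_hessDet_mul (g := fun k => (qFact RatFunc.X (2 * k))⁻¹) (by simp [qFact])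

lemma mk_Etan_div_qFact :
    mk (fun n => Etan n / qFact RatFunc.X (2 * n + 1)) =
      mk (fun n => (-1) ^ n * DeltaQ n) *
        mk (fun k => (qFact (RatFunc.X : RatFunc ℚ) (2 * k + 1))⁻¹) := by
  ext n
  rw [coeff_mk, coeff_mul,
    Nat.sum_antidiagonal_eq_sum_range_succ (fun i j => coeff i _ * coeff j _), Etan_div_qFact]
  simp only [coeff_mk, div_eq_mul_inv]

lemma coshQ_eq_rescale_expand :
    coshQ = rescale (1 - RatFunc.X)⁻¹
      (expand 2 two_ne_zero (mk fun k => (qFact (RatFunc.X : RatFunc ℚ) (2 * k))⁻¹)) := by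
  simp only [coshQ, inv_qPoch]
  exact mk_even_eq_rescale_expand _ _

lemma sinhQ_eq_rescale_X_mul_expand :
    sinhQ = rescale (1 - RatFunc.X)⁻¹
      (X * expand 2 two_ne_zero (mk fun k => (qFact (RatFunc.X : RatFunc ℚ) (2 * k + 1))⁻¹)) := by
  simp only [sinhQ, inv_qPoch]
  exact mk_odd_eq_rescale_X_mul_expand _ _

lemma mk_Etan_div_qPoch_eq_rescale_X_mul_expand :
    (mk fun m => if m % 2 = 1 then Etan (m / 2) / qPoch (RatFunc.X : RatFunc ℚ) m else 0) =
      rescale (1 - RatFunc.X)⁻¹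
        (X * expand 2 two_ne_zero (mk fun n => Etan n / qFact RatFunc.X (2 * n + 1))) := by
  have h := mk_odd_eq_rescale_X_mul_expand (1 - RatFunc.X)⁻¹
    (fun m => Etan (m / 2) / qFact (RatFunc.X : RatFunc ℚ) m)
  simp only [show ∀ k, (2 * k + 1) / 2 = k by omega] at h
  rw [← h]
  congr! 3 with m
  rw [div_eq_mul_inv, div_eq_mul_inv, inv_qPoch]
  ring

/-- `∑_{n≥0} E_{2n+1,q} t^{2n+1}/(q;q)_{2n+1} = tanh_q(t) = sinh_q(t)/cosh_q(t)`, i.e. the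
left-hand series times `cosh_q(t)` equals `sinh_q(t)`, as formal power series over `ℚ(q)`. -/
theorem stmt6 :
    (PowerSeries.mk fun m =>
        if m % 2 = 1 then Etan (m / 2) / qPoch (RatFunc.X : RatFunc ℚ) m else 0) * coshQ
      = sinhQ := by
  rw [mk_Etan_div_qPoch_eq_rescale_X_mul_expand, coshQ_eq_rescale_expand,
    sinhQ_eq_rescale_X_mul_expand, ← map_mul, mk_Etan_div_qFact]
  have hrecip := congrArg (expand 2 two_ne_zero) mk_DeltaQ_mul_mk_inv_qFact_even
  rw [map_mul, map_one] at hrecip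
  congr 1
  rw [map_mul]
  linear_combination (X * expand 2 two_ne_zero
    (mk fun k => (qFact (RatFunc.X : RatFunc ℚ) (2 * k + 1))⁻¹)) * hrecip
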